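/- arXiv:1702.07930 — 2 statements merged into one kernel-verified Lean document; each statement's English description precedes it below -/
import Mathlib

section
/- For any ψ ∈ ℂ^p and x ∈ ℝ^p, the subdifferential at x of the convex function χ ↦ |ψ^H χ| on ℝ^p equals {Re(g ψ) : g ∈ ℂ, |g| ≤ 1, and g = (ψ^H x)/|ψ^H x| if ψ^H x ≠ 0}; i.e., a vector v ∈ ℝ^p is a subgradient if and only if v = Re(g ψ) for such a scalar g. -/
open Matrix
open scoped RealInnerProductSpace ENNReal

noncomputable section

def cnorm1 {n : ℕ} (z : Fin n → ℂ) : ℝ := ∑ j, ‖z j‖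

noncomputable def cnormInf {n : ℕ} (z : Fin n → ℂ) : ℝ := ⨆ j, ‖z j‖

def psiH {p p' : ℕ} (Ψ : Matrix (Fin p) (Fin p') ℂ) (x : EuclideanSpace ℝ (Fin p)) :
    Fin p' → ℂ :=
  Matrix.mulVec Ψᴴ fun i => (x i : ℂ)

def rePsi {p p' : ℕ} (Ψ : Matrix (Fin p) (Fin p') ℂ) (w : Fin p' → ℂ) :
    EuclideanSpace ℝ (Fin p) :=
  WithLp.toLp 2 (fun i => (Matrix.mulVec Ψ w i).re)

def Gset {n : ℕ} (s : Fin n → ℂ) : Set (Fin n → ℂ) :=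
  {w | ∀ j, ‖w j‖ ≤ 1 ∧ (s j ≠ 0 → w j = s j / (‖s j‖ : ℂ))}

def normalCone {p : ℕ} (C : Set (EuclideanSpace ℝ (Fin p))) (x : EuclideanSpace ℝ (Fin p)) :
    Set (EuclideanSpace ℝ (Fin p)) :=
  {a | ∀ y ∈ C, ⟪a, y - x⟫ ≤ 0}

def XuSet {p p' : ℕ} (C : Set (EuclideanSpace ℝ (Fin p))) (L : EuclideanSpace ℝ (Fin p) → ℝ)
    (Ψ : Matrix (Fin p) (Fin p') ℂ) (u : ℝ) : Set (EuclideanSpace ℝ (Fin p)) :=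
  {x ∈ C | ∀ χ ∈ C, L x + u * cnorm1 (psiH Ψ x) ≤ L χ + u * cnorm1 (psiH Ψ χ)}

def QSet {p p' : ℕ} (C : Set (EuclideanSpace ℝ (Fin p))) (Ψ : Matrix (Fin p) (Fin p') ℂ) :
    Set (EuclideanSpace ℝ (Fin p)) :=
  {x ∈ C | ∀ χ ∈ C, cnorm1 (psiH Ψ x) ≤ cnorm1 (psiH Ψ χ)}

def XdSet {p p' : ℕ} (C : Set (EuclideanSpace ℝ (Fin p))) (L : EuclideanSpace ℝ (Fin p) → ℝ)
    (Ψ : Matrix (Fin p) (Fin p') ℂ) : Set (EuclideanSpace ℝ (Fin p)) :=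
  {x ∈ QSet C Ψ | ∀ χ ∈ QSet C Ψ, L x ≤ L χ}

def Ubound {p p' : ℕ} (C : Set (EuclideanSpace ℝ (Fin p))) (L : EuclideanSpace ℝ (Fin p) → ℝ)
    (Ψ : Matrix (Fin p) (Fin p') ℂ) : ℝ≥0∞ :=
  sInf (ENNReal.ofReal '' {u : ℝ | 0 ≤ u ∧ (XuSet C L Ψ u ∩ QSet C Ψ).Nonempty})


/-- `ψᴴ x = ∑ i, conj ψ_i · x_i` for a real vector `x`. -/
def psiHs {p : ℕ} (ψ : Fin p → ℂ) (x : EuclideanSpace ℝ (Fin p)) : ℂ :=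
  ∑ i, starRingEnd ℂ (ψ i) * (x i : ℂ)

/-!
For a seminorm `q`, a vector `v` is a subgradient of `q` at `x` iff `⟪v, ·⟫ ≤ q` and
`⟪v, x⟫ = q x`. For `q = ‖A ·‖` with `A` linear between finite-dimensional spaces, the first
condition puts `v` in `(ker A)ᗮ = range (A† A)`, so `v = A† g` with `g = A h₀`, and
`‖g‖² = ⟪v, h₀⟫ ≤ ‖g‖` gives `‖g‖ ≤ 1`. The second condition then reads `⟪g, A x⟫ = ‖A x‖`,
the equality case of Cauchy–Schwarz. Here `A = ψᴴ` as a real-linear map `ℝ^p → ℂ`, whose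
adjoint is `g ↦ Re (g ψ)`.
-/
section Subgradient

variable {E : Type*} [NormedAddCommGroup E] [InnerProductSpace ℝ E]

theorem Seminorm.subgradient_iff (p : Seminorm ℝ E) (x v : E) :
    (∀ y, p x + ⟪v, y - x⟫ ≤ p y) ↔ (∀ h, ⟪v, h⟫ ≤ p h) ∧ ⟪v, x⟫ = p x := by
  constructor
  · intro hv
    have hle : ∀ h, ⟪v, h⟫ ≤ p h := fun h => by
      have := hv (x + h)
      rw [add_sub_cancel_left] at this
      linarith [map_add_le_add p x h]
    refine ⟨hle, le_antisymm (hle x) ?_⟩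
    have := hv 0
    rw [zero_sub, inner_neg_right, map_zero] at this
    linarith
  · rintro ⟨hle, hx⟩ y
    rw [inner_sub_right, hx]
    linarith [hle y]

theorem real_inner_eq_norm_iff {g w : E} (hg : ‖g‖ ≤ 1) :
    ⟪g, w⟫ = ‖w‖ ↔ (w ≠ 0 → g = ‖w‖⁻¹ • w) := by
  rcases eq_or_ne w 0 with rfl | hw
  · simp
  have hw' : 0 < ‖w‖ := norm_pos_iff.mpr hw
  simp only [ne_eq, hw, not_false_eq_true, forall_const]
  constructor
  · intro h
    have hg1 : ‖g‖ = 1 := by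
      refine le_antisymm hg ?_
      nlinarith [real_inner_le_norm g w]
    have := inner_eq_norm_mul_iff_real.mp (by rw [h, hg1, one_mul])
    rw [hg1, one_smul] at this
    nth_rw 2 [← this]
    rw [smul_smul, inv_mul_cancel₀ hw'.ne', one_smul]
  · rintro rfl
    rw [real_inner_smul_left, real_inner_self_eq_norm_sq]
    field_simp

variable {F : Type*} [NormedAddCommGroup F] [InnerProductSpace ℝ F]
  [FiniteDimensional ℝ E] [FiniteDimensional ℝ F]

theorem LinearMap.exists_adjoint_eq_of_inner_le_norm {A : E →ₗ[ℝ] F} {v : E}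
    (hv : ∀ h, ⟪v, h⟫ ≤ ‖A h‖) : ∃ g : F, ‖g‖ ≤ 1 ∧ A.adjoint g = v := by
  have hker : v ∈ (LinearMap.ker A)ᗮ := by
    refine (Submodule.mem_orthogonal' _ _).mpr fun h hh => le_antisymm ?_ ?_
    · simpa [LinearMap.mem_ker.mp hh] using hv h
    · simpa [LinearMap.mem_ker.mp hh] using hv (-h)
  rw [A.orthogonal_ker, ← A.range_adjoint_comp_self] at hker
  obtain ⟨h₀, rfl⟩ := hker
  refine ⟨A h₀, ?_, rfl⟩
  have hsq : ‖A h₀‖ ^ 2 ≤ ‖A h₀‖ := by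
    rw [← real_inner_self_eq_norm_sq, ← A.adjoint_inner_left, ← LinearMap.comp_apply]
    exact hv h₀
  nlinarith [norm_nonneg (A h₀)]

theorem LinearMap.subgradient_norm_comp_iff (A : E →ₗ[ℝ] F) (x v : E) :
    (∀ y, ‖A x‖ + ⟪v, y - x⟫ ≤ ‖A y‖) ↔
      ∃ g : F, ‖g‖ ≤ 1 ∧ (A x ≠ 0 → g = ‖A x‖⁻¹ • A x) ∧ A.adjoint g = v := by
  have key := ((normSeminorm ℝ F).comp A).subgradient_iff x v
  simp only [Seminorm.comp_apply, coe_normSeminorm] at key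
  rw [key]
  constructor
  · rintro ⟨hle, hx⟩
    obtain ⟨g, hg, rfl⟩ := A.exists_adjoint_eq_of_inner_le_norm hle
    refine ⟨g, hg, (real_inner_eq_norm_iff hg).mp ?_, rfl⟩
    rwa [← A.adjoint_inner_left]
  · rintro ⟨g, hg, hgx, rfl⟩
    refine ⟨fun h => ?_, ?_⟩
    · rw [A.adjoint_inner_left]
      nlinarith [real_inner_le_norm g (A h), norm_nonneg (A h)]
    · rw [A.adjoint_inner_left]
      exact (real_inner_eq_norm_iff hg).mpr hgx

end Subgradient

def psiHsLinear {p : ℕ} (ψ : Fin p → ℂ) : EuclideanSpace ℝ (Fin p) →ₗ[ℝ] ℂ where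
  toFun := psiHs ψ
  map_add' y z := by simp [psiHs, mul_add, Finset.sum_add_distrib]
  map_smul' c y := by simp [psiHs, Finset.mul_sum, mul_left_comm]

theorem psiHsLinear_apply {p : ℕ} (ψ : Fin p → ℂ) (y : EuclideanSpace ℝ (Fin p)) :
    psiHsLinear ψ y = psiHs ψ y := rfl

theorem psiHs_single {p : ℕ} (ψ : Fin p → ℂ) (i : Fin p) :
    psiHs ψ (EuclideanSpace.single i 1) = starRingEnd ℂ (ψ i) := by
  simp [psiHs, PiLp.single_apply, apply_ite]

theorem adjoint_psiHsLinear_apply {p : ℕ} (ψ : Fin p → ℂ) (g : ℂ) (i : Fin p) :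
    (psiHsLinear ψ).adjoint g i = (g * ψ i).re := by
  have h := (psiHsLinear ψ).adjoint_inner_left (EuclideanSpace.single i 1) g
  rw [EuclideanSpace.inner_single_right, psiHsLinear_apply, psiHs_single, Complex.inner,
    ← map_mul, Complex.conj_re, mul_comm (ψ i)] at h
  simpa using h

theorem statement_4_general {p : ℕ} (ψ : Fin p → ℂ) (x v : EuclideanSpace ℝ (Fin p)) :
    (∀ y : EuclideanSpace ℝ (Fin p),
        ‖psiHs ψ x‖ + ⟪v, y - x⟫ ≤ ‖psiHs ψ y‖) ↔
      ∃ g : ℂ, ‖g‖ ≤ 1 ∧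
        (psiHs ψ x ≠ 0 → g = psiHs ψ x / (‖psiHs ψ x‖ : ℂ)) ∧
        v = fun i => (g * ψ i).re := by
  refine ((psiHsLinear ψ).subgradient_norm_comp_iff x v).trans <|
    exists_congr fun g => and_congr_right fun _ => and_congr ?_ ?_
  · rw [psiHsLinear_apply, Complex.real_smul, Complex.ofReal_inv, ← div_eq_inv_mul]
  · have hadj : ⇑((psiHsLinear ψ).adjoint g) = fun i => (g * ψ i).re :=
      funext (adjoint_psiHsLinear_apply ψ g)
    rw [eq_comm, WithLp.ext_iff, hadj]

theorem statement_4 {p : ℕ} (hp : 0 < p) (ψ : Fin p → ℂ) (x v : EuclideanSpace ℝ (Fin p)) :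
    (∀ y : EuclideanSpace ℝ (Fin p),
        ‖psiHs ψ x‖ + ⟪v, y - x⟫ ≤ ‖psiHs ψ y‖) ↔
      ∃ g : ℂ, ‖g‖ ≤ 1 ∧
        (psiHs ψ x ≠ 0 → g = psiHs ψ x / (‖psiHs ψ x‖ : ℂ)) ∧
        v = fun i => (g * ψ i).re :=
  statement_4_general ψ x v
end
end

section
/- (Remark 3, sufficiency) If there exists x⋄ ∈ X⋄ such that the set ∇L(x⋄) + N_C(x⋄) is disjoint from Re(R(Ψ)) = {Re(Ψ w) : w ∈ ℂ^{p'}}, then X_u ∩ Q = ∅ for every u ≥ 0; i.e., no finite upper bound U exists (U = +∞). -/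
open Matrix
open scoped RealInnerProductSpace ENNReal

noncomputable section

/-!
If `x ∈ X_u ∩ Q`, then `x⋄` is no worse than `x` for both `L` and `‖Ψᴴ ·‖₁`, so `x⋄` also minimizes
`L + u ‖Ψᴴ ·‖₁` over `C`. Fermat's rule for this problem yields `w ∈ Gset (Ψᴴ x⋄)`, a subgradient
of `‖·‖₁` at `Ψᴴ x⋄`, with `-(∇L(x⋄) + u Re(Ψ w)) ∈ N_C(x⋄)`; hence `∇L(x⋄) + N_C(x⋄)` contains
`Re(Ψ(-u w))`. Fermat's rule comes from the one-sided directional derivatives along feasible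
directions, each attained at some element of `Gset`, and a minimax step (Farkas' lemma in
`ℝ^p`) turning "every feasible direction has a good subgradient" into "one subgradient is good for
every feasible direction".
-/

open Set

section NormSubgradient

variable {F : Type*} [NormedAddCommGroup F] [InnerProductSpace ℝ F]

open Classical in
/-- A subgradient of `‖·‖` at `s` at which the one-sided directional derivative in direction `z`
is attained. -/
def normSubgradient (s z : F) : F := if s = 0 then ‖z‖⁻¹ • z else ‖s‖⁻¹ • s

lemma norm_normSubgradient_le (s z : F) : ‖normSubgradient s z‖ ≤ 1 := by
  unfold normSubgradient
  split_ifs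
  all_goals
    rw [norm_smul, norm_inv, norm_norm]
    exact inv_mul_le_one_of_le₀ le_rfl (norm_nonneg _)

lemma real_inner_inv_norm_smul_self (z : F) : ⟪‖z‖⁻¹ • z, z⟫ = ‖z‖ := by
  rw [real_inner_smul_left, real_inner_self_eq_norm_sq]
  rcases eq_or_ne ‖z‖ 0 with hz | hz
  · simp [hz]
  · field_simp

lemma hasDerivWithinAt_norm_add_smul (s z : F) :
    HasDerivWithinAt (fun t : ℝ => ‖s + t • z‖) ⟪normSubgradient s z, z⟫ (Ici 0) 0 := by
  rcases eq_or_ne s 0 with rfl | hs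
  · rw [normSubgradient, if_pos rfl, real_inner_inv_norm_smul_self]
    refine ((hasDerivAt_mul_const ‖z‖).hasDerivWithinAt.congr_of_mem (fun t ht => ?_)
      self_mem_Ici)
    rw [zero_add, norm_smul, Real.norm_of_nonneg ht]
  · have hline : HasDerivAt (fun t : ℝ => s + t • z) z 0 := by
      simpa using ((hasDerivAt_id (0 : ℝ)).smul_const z).const_add s
    have hsq := hline.norm_sq.sqrt (by simpa using hs)
    simp only [zero_smul, add_zero, Real.sqrt_sq (norm_nonneg _)] at hsq
    rw [normSubgradient, if_neg hs, real_inner_smul_left]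
    exact hsq.hasDerivWithinAt.congr_deriv <| by
      rw [mul_div_mul_left _ _ two_ne_zero, inv_mul_eq_div]

end NormSubgradient

section Minimax

variable {E : Type*} [NormedAddCommGroup E] [InnerProductSpace ℝ E]

lemma isClosed_setOf_exists_inner_nonneg {K : Set E} (hK : IsCompact K) :
    IsClosed {d | ∃ k ∈ K, 0 ≤ ⟪k, d⟫} := by
  refine isOpen_compl_iff.1 (isOpen_iff_eventually.2 fun d₀ hd₀ => ?_)
  simp only [mem_compl_iff, mem_ofPred_eq, not_exists, not_and, not_le] at hd₀ ⊢
  refine hK.eventually_forall_of_forall_eventually fun k hk => ?_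
  exact (continuous_snd.inner continuous_fst).continuousAt.eventually_lt continuousAt_const
    (hd₀ k hk)

theorem exists_forall_inner_nonneg_of_isCompact [CompleteSpace E] {K : Set E}
    (hKconv : Convex ℝ K) (hKcomp : IsCompact K) (S : ConvexCone ℝ E) (hS : (S : Set E).Nonempty)
    (h : ∀ d ∈ S, ∃ k ∈ K, 0 ≤ ⟪k, d⟫) : ∃ k ∈ K, ∀ d ∈ S, 0 ≤ ⟪d, k⟫ := by
  lift S.closure to ProperCone ℝ E using ⟨hS.closure, isClosed_closure⟩ with T hT
  have hTS : (T : Set E) = closure S := congrArg SetLike.coe hT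
  suffices ¬ Disjoint K (ProperCone.innerDual (T : Set E)) by
    obtain ⟨k, hkK, hkT⟩ := not_disjoint_iff.1 this
    exact ⟨k, hkK, fun d hd => hkT (by rw [hTS]; exact subset_closure hd)⟩
  -- The separating vector lies in the closure of `S` by the bipolar theorem, and `h` extends to
  -- that closure because `K` is compact.
  intro hdisj
  obtain ⟨f, hfT, hfK⟩ := (ProperCone.innerDual (T : Set E)).hyperplane_separation hKconv hKcomp
    hdisj
  set d := (InnerProductSpace.toDual ℝ E).symm f
  have hf : ∀ y, ⟪y, d⟫ = f y := fun y => by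
    rw [real_inner_comm, InnerProductSpace.toDual_symm_apply]
  have hdT : d ∈ ProperCone.innerDual (ProperCone.innerDual (T : Set E) : Set E) :=
    fun b hb => by simpa [hf] using hfT b hb
  rw [ProperCone.innerDual_innerDual, ← SetLike.mem_coe, hTS] at hdT
  obtain ⟨k, hkK, hk⟩ := (isClosed_setOf_exists_inner_nonneg hKcomp).closure_subset_iff.2 h hdT
  exact (hfK k hkK).not_ge (hf k ▸ hk)

end Minimax

section PsiMaps

variable {p p' : ℕ} (Ψ : Matrix (Fin p) (Fin p') ℂ)

lemma psiH_add_smul (x d : EuclideanSpace ℝ (Fin p)) (t : ℝ) :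
    psiH Ψ (x + t • d) = psiH Ψ x + t • psiH Ψ d := by
  rw [psiH, psiH, psiH, ← Matrix.mulVec_smul, ← Matrix.mulVec_add]
  congr 1
  ext i
  simp [Complex.real_smul]

def rePsiLinearMap : (Fin p' → ℂ) →ₗ[ℝ] EuclideanSpace ℝ (Fin p) where
  toFun := rePsi Ψ
  map_add' w w' := by ext i; simp [rePsi, Matrix.mulVec_add]
  map_smul' c w := by ext i; simp [rePsi, Matrix.mulVec_smul]

lemma rePsi_smul (c : ℝ) (w : Fin p' → ℂ) : rePsi Ψ (c • w) = c • rePsi Ψ w :=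
  (rePsiLinearMap Ψ).map_smul c w

lemma inner_rePsi (w : Fin p' → ℂ) (d : EuclideanSpace ℝ (Fin p)) :
    ⟪rePsi Ψ w, d⟫ = ∑ j, ⟪w j, psiH Ψ d j⟫ := by
  simp only [rePsi, psiH, PiLp.inner_apply, Complex.inner, RCLike.inner_apply, conj_trivial,
    Matrix.mulVec, dotProduct, Matrix.conjTranspose_apply, Complex.re_sum, Finset.sum_mul,
    Finset.mul_sum]
  rw [Finset.sum_comm]
  refine Finset.sum_congr rfl fun j _ => Finset.sum_congr rfl fun i _ => ?_
  simp only [Complex.mul_re, RCLike.star_def, Complex.conj_re, Complex.ofReal_re,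
    Complex.conj_im, Complex.ofReal_im, mul_zero, sub_zero, Complex.mul_im, neg_mul, zero_add,
    mul_neg, neg_neg]
  ring

end PsiMaps

section Gset

variable {n : ℕ}

lemma Gset_eq_pi (s : Fin n → ℂ) :
    Gset s = univ.pi fun j => Metric.closedBall 0 1 ∩ {z | s j ≠ 0 → z = s j / (‖s j‖ : ℂ)} := by
  ext w
  simp [Gset]

lemma convex_Gset (s : Fin n → ℂ) : Convex ℝ (Gset s) := by
  rw [Gset_eq_pi]
  refine convex_pi fun j _ => (convex_closedBall 0 1).inter ?_
  by_cases hs : s j = 0 <;> simp [hs, convex_singleton, convex_univ]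

lemma isCompact_Gset (s : Fin n → ℂ) : IsCompact (Gset s) := by
  rw [Gset_eq_pi]
  exact isCompact_univ_pi fun j => (isCompact_closedBall 0 1).inter_right <| by
    by_cases hs : s j = 0 <;> simp [hs]

lemma normSubgradient_mem_Gset (s z : Fin n → ℂ) :
    (fun j => normSubgradient (s j) (z j)) ∈ Gset s := fun j =>
  ⟨norm_normSubgradient_le _ _, fun hs => by
    simp only [normSubgradient, if_neg hs]
    rw [Complex.real_smul, Complex.ofReal_inv, inv_mul_eq_div]⟩

end Gset

lemma HasDerivWithinAt.nonneg_of_isMinOn_Icc {F : ℝ → ℝ} {F' c : ℝ}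
    (hF : HasDerivWithinAt F F' (Ici 0) 0) (hc : 0 < c) (hmin : IsMinOn F (Icc 0 c) 0) :
    0 ≤ F' := by
  have hseg : segment ℝ (0 : ℝ) (0 + c) ⊆ Icc 0 c := by rw [zero_add, segment_eq_Icc hc.le]
  have := hmin.localize.hasFDerivWithinAt_nonneg (hF.mono Icc_subset_Ici_self).hasFDerivWithinAt
    (mem_posTangentConeAt_of_segment_subset hseg)
  rw [ContinuousLinearMap.toSpanSingleton_apply, smul_eq_mul] at this
  exact (mul_nonneg_iff_of_pos_left hc).1 this

section Optimality

variable {p p' : ℕ} {Ψ : Matrix (Fin p) (Fin p') ℂ}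

lemma hasDerivWithinAt_cnorm1_psiH (x d : EuclideanSpace ℝ (Fin p)) :
    HasDerivWithinAt (fun t : ℝ => cnorm1 (psiH Ψ (x + t • d)))
      ⟪rePsi Ψ fun j => normSubgradient (psiH Ψ x j) (psiH Ψ d j), d⟫ (Ici 0) 0 := by
  simp only [cnorm1, psiH_add_smul, inner_rePsi, Pi.add_apply, Pi.smul_apply]
  exact HasDerivWithinAt.fun_sum fun j _ => hasDerivWithinAt_norm_add_smul _ _

variable {C : Set (EuclideanSpace ℝ (Fin p))} {L : EuclideanSpace ℝ (Fin p) → ℝ}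
  {g x : EuclideanSpace ℝ (Fin p)} {u : ℝ}

lemma inner_nonneg_of_isMinOn (hC : Convex ℝ C) (hx : x ∈ C) (hL : HasGradientAt L g x)
    (hmin : IsMinOn (fun y => L y + u * cnorm1 (psiH Ψ y)) C x) {d : EuclideanSpace ℝ (Fin p)}
    (hd : x + d ∈ C) :
    0 ≤ ⟪g + u • rePsi Ψ (fun j => normSubgradient (psiH Ψ x j) (psiH Ψ d j)), d⟫ := by
  have hline : HasDerivAt (fun t : ℝ => x + t • d) d 0 := by
    simpa using ((hasDerivAt_id (0 : ℝ)).smul_const d).const_add x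
  have hLline : HasDerivAt (fun t : ℝ => L (x + t • d)) ⟪g, d⟫ 0 :=
    hL.hasFDerivAt.comp_hasDerivAt_of_eq 0 hline (by simp)
  have hF := hLline.hasDerivWithinAt.add ((hasDerivWithinAt_cnorm1_psiH (Ψ := Ψ) x d).const_mul u)
  rw [inner_add_left, real_inner_smul_left]
  refine hF.nonneg_of_isMinOn_Icc one_pos fun t ht => ?_
  simpa using hmin (hC.add_smul_mem hx hd ht)

theorem exists_mem_Gset_neg_mem_normalCone_of_isMinOn (hC : Convex ℝ C) (hx : x ∈ C)
    (hL : HasGradientAt L g x) (hmin : IsMinOn (fun y => L y + u * cnorm1 (psiH Ψ y)) C x) :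
    ∃ w ∈ Gset (psiH Ψ x), -(g + u • rePsi Ψ w) ∈ normalCone C x := by
  have hKconv : Convex ℝ ((fun w => g + u • rePsi Ψ w) '' Gset (psiH Ψ x)) := by
    have := ((convex_Gset (psiH Ψ x)).linear_image (u • rePsiLinearMap Ψ)).translate g
    rwa [image_image] at this
  have hKcomp : IsCompact ((fun w => g + u • rePsi Ψ w) '' Gset (psiH Ψ x)) :=
    (isCompact_Gset _).image <| continuous_const.add <|
      (rePsiLinearMap Ψ).continuous_of_finiteDimensional.const_smul u
  have hD : Convex ℝ ((fun d => x + d) ⁻¹' C) := hC.translate_preimage_right x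
  obtain ⟨_, ⟨w, hw, rfl⟩, hk⟩ := exists_forall_inner_nonneg_of_isCompact hKconv hKcomp
    (ConvexCone.hull ℝ ((fun d => x + d) ⁻¹' C)) ⟨0, ConvexCone.subset_hull (by simpa)⟩
    fun d hd => by
      obtain ⟨r, hr, e, he, rfl⟩ := (ConvexCone.mem_hull_of_convex hD).1 hd
      refine ⟨_, mem_image_of_mem _ (normSubgradient_mem_Gset _ (psiH Ψ e)), ?_⟩
      rw [real_inner_smul_right]
      exact mul_nonneg hr.le (inner_nonneg_of_isMinOn hC hx hL hmin he)
  refine ⟨w, hw, fun y hy => ?_⟩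
  rw [inner_neg_left, neg_nonpos, real_inner_comm]
  exact hk (y - x) (ConvexCone.subset_hull (by simpa))

end Optimality

theorem statement_7_general {p p' : ℕ}
    (C : Set (EuclideanSpace ℝ (Fin p)))
    (hCcv : Convex ℝ C)
    (L : EuclideanSpace ℝ (Fin p) → ℝ)
    (gradL : EuclideanSpace ℝ (Fin p) → EuclideanSpace ℝ (Fin p))
    (hLd : ∀ x, HasGradientAt L (gradL x) x)
    (Ψ : Matrix (Fin p) (Fin p') ℂ)
    (hdisj : ∃ xd ∈ XdSet C L Ψ,
      ∀ a ∈ normalCone C xd, ∀ w : Fin p' → ℂ, gradL xd + a ≠ rePsi Ψ w) :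
    ∀ u : ℝ, 0 ≤ u → XuSet C L Ψ u ∩ QSet C Ψ = ∅ := by
  obtain ⟨xd, ⟨⟨hxdC, hxdQ⟩, hxdL⟩, hxd⟩ := hdisj
  intro u hu
  refine eq_empty_iff_forall_notMem.2 fun x ⟨⟨_, hxXu⟩, hxQ⟩ => ?_
  have hmin : IsMinOn (fun y => L y + u * cnorm1 (psiH Ψ y)) C xd := fun y hy =>
    (add_le_add (hxdL x hxQ) (mul_le_mul_of_nonneg_left (hxdQ x hxQ.1) hu)).trans (hxXu y hy)
  obtain ⟨w, -, hw⟩ := exists_mem_Gset_neg_mem_normalCone_of_isMinOn hCcv hxdC (hLd xd) hmin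
  refine hxd _ hw ((-u) • w) ?_
  rw [rePsi_smul, neg_smul]
  abel

theorem statement_7 {p p' : ℕ} (hp : 0 < p) (hp' : 0 < p')
    (C : Set (EuclideanSpace ℝ (Fin p))) (hCne : C.Nonempty) (hCcl : IsClosed C)
    (hCcv : Convex ℝ C)
    (L : EuclideanSpace ℝ (Fin p) → ℝ) (hLcv : ConvexOn ℝ Set.univ L)
    (gradL : EuclideanSpace ℝ (Fin p) → EuclideanSpace ℝ (Fin p))
    (hLd : ∀ x, HasGradientAt L (gradL x) x)
    (hLb : BddBelow (L '' C))
    (Ψ : Matrix (Fin p) (Fin p') ℂ) (hXd : (XdSet C L Ψ).Nonempty)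
    (hdisj : ∃ xd ∈ XdSet C L Ψ,
      ∀ a ∈ normalCone C xd, ∀ w : Fin p' → ℂ, gradL xd + a ≠ rePsi Ψ w) :
    ∀ u : ℝ, 0 ≤ u → XuSet C L Ψ u ∩ QSet C Ψ = ∅ :=
  statement_7_general C hCcv L gradL hLd Ψ hdisj
end
end
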